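/- Majorization descent lemma: suppose J, R: ℝᵐ → ℝ with R convex, and z₊ minimizes the function z ↦ J(z_n) + ⟨z − z_n, ∇J(z_n)⟩ + (1/(2τ))‖z − z_n‖²_H + R(z) over a closed convex set C containing z_n, where H is symmetric positive definite and τ > 0. If additionally J(z₊) ≤ J(z_n) + ⟨z₊ − z_n, ∇J(z_n)⟩ + (1/(2τ))‖z₊ − z_n‖²_H, then (J+R)(z_n) − (J+R)(z₊) ≥ (1/(2τ))‖z_n − z₊‖²_H. -/

import Mathlib

/-!
Compare the minimizer `z₊` with the points `z_t = z₊ + t (z_n - z₊)` of the segment towards `z_n`.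
Since `z_t - z_n = (1 - t)(z₊ - z_n)`, minimality of `z₊` and convexity of `R` give, after
dividing by `t`, `⟪z₊ - z_n, ∇J(z_n)⟫ + (2 - t) q(z₊ - z_n) + R z₊ ≤ R z_n` with
`q = ‖·‖²_H / (2τ)`. Letting `t → 0⁺` doubles the quadratic term of the model, and adding the
majorization inequality for `J` cancels the linear term and leaves one copy of `q(z₊ - z_n)`.
-/

open scoped RealInnerProductSpace Topology

open Filter Set

lemma le_of_forall_mem_Ioc_sub_mul_le {a b c : ℝ} (h : ∀ t ∈ Ioc (0 : ℝ) 1, a - t * b ≤ c) :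
    a ≤ c := by
  have hlim : Tendsto (fun t : ℝ => a - t * b) (𝓝[>] 0) (𝓝 a) := by
    have : Tendsto (fun t : ℝ => a - t * b) (𝓝 0) (𝓝 (a - 0 * b)) :=
      tendsto_const_nhds.sub (tendsto_id.mul_const b)
    simpa using this.mono_left nhdsWithin_le_nhds
  exact le_of_tendsto hlim (eventually_of_mem (Ioc_mem_nhdsGT zero_lt_one) h)

section QuadraticModel

variable {E : Type*} [AddCommGroup E] [Module ℝ E] {C : Set E} {R q : E → ℝ} {ℓ : E →ₗ[ℝ] ℝ}
  {x y : E}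

lemma ConvexOn.add_two_sub_mul_le_of_isMinOn (hR : ConvexOn ℝ C R)
    (hq : ∀ (s : ℝ) v, q (s • v) = s ^ 2 * q v) (hx : x ∈ C) (hy : y ∈ C)
    (hmin : IsMinOn (fun z => ℓ (z - x) + q (z - x) + R z) C y) {t : ℝ} (ht : t ∈ Ioc (0 : ℝ) 1) :
    ℓ (y - x) + (2 - t) * q (y - x) + R y ≤ R x := by
  obtain ⟨ht0, ht1⟩ := ht
  have hsub : (t • x + (1 - t) • y) - x = (1 - t) • (y - x) := by module
  have hzC : t • x + (1 - t) • y ∈ C := hR.1 hx hy ht0.le (sub_nonneg.2 ht1) (add_sub_cancel t 1)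
  have hconv : R (t • x + (1 - t) • y) ≤ t * R x + (1 - t) * R y :=
    hR.2 hx hy ht0.le (sub_nonneg.2 ht1) (add_sub_cancel t 1)
  have hz : ℓ (y - x) + q (y - x) + R y ≤
      (1 - t) * ℓ (y - x) + (1 - t) ^ 2 * q (y - x) + R (t • x + (1 - t) • y) := by
    have := isMinOn_iff.1 hmin _ hzC
    rwa [hsub, map_smul, hq, smul_eq_mul] at this
  have : t * (ℓ (y - x) + (2 - t) * q (y - x) + R y) ≤ t * R x := by
    linear_combination hz + hconv
  exact le_of_mul_le_mul_left this ht0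

lemma ConvexOn.add_two_mul_le_of_isMinOn (hR : ConvexOn ℝ C R)
    (hq : ∀ (s : ℝ) v, q (s • v) = s ^ 2 * q v) (hx : x ∈ C) (hy : y ∈ C)
    (hmin : IsMinOn (fun z => ℓ (z - x) + q (z - x) + R z) C y) :
    ℓ (y - x) + 2 * q (y - x) + R y ≤ R x :=
  le_of_forall_mem_Ioc_sub_mul_le (b := q (y - x)) fun t ht => by
    linarith [hR.add_two_sub_mul_le_of_isMinOn hq hx hy hmin ht]

end QuadraticModel

lemma sum_sum_smul_mul_smul {ι : Type*} [Fintype ι] (H : Matrix ι ι ℝ) (s : ℝ) (v : ι → ℝ) :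
    ∑ i, ∑ j, (s • v) i * H i j * (s • v) j = s ^ 2 * ∑ i, ∑ j, v i * H i j * v j := by
  simp only [Pi.smul_apply, smul_eq_mul, Finset.mul_sum]
  exact Finset.sum_congr rfl fun i _ => Finset.sum_congr rfl fun j _ => by ring

theorem stmt6_general {m : ℕ} (J R : EuclideanSpace ℝ (Fin m) → ℝ)
    (hR : ConvexOn ℝ Set.univ R)
    (H : Matrix (Fin m) (Fin m) ℝ)
    (τ : ℝ)
    (C : Set (EuclideanSpace ℝ (Fin m))) (hCconv : Convex ℝ C)
    (zn : EuclideanSpace ℝ (Fin m)) (hzn : zn ∈ C)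
    (g : EuclideanSpace ℝ (Fin m))
    (zp : EuclideanSpace ℝ (Fin m)) (hzp : zp ∈ C)
    (hmin : ∀ z ∈ C,
      J zn + ⟪zp - zn, g⟫ + (1 / (2 * τ)) * (∑ i, ∑ j, (zp - zn) i * H i j * (zp - zn) j)
          + R zp ≤
        J zn + ⟪z - zn, g⟫ + (1 / (2 * τ)) * (∑ i, ∑ j, (z - zn) i * H i j * (z - zn) j)
          + R z)
    (hmaj : J zp ≤
      J zn + ⟪zp - zn, g⟫ +
        (1 / (2 * τ)) * (∑ i, ∑ j, (zp - zn) i * H i j * (zp - zn) j)) :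
    (1 / (2 * τ)) * (∑ i, ∑ j, (zn - zp) i * H i j * (zn - zp) j) ≤
      (J zn + R zn) - (J zp + R zp) := by
  set q : EuclideanSpace ℝ (Fin m) → ℝ :=
    fun v => (1 / (2 * τ)) * ∑ i, ∑ j, v i * H i j * v j with hq_def
  have hq : ∀ (s : ℝ) v, q (s • v) = s ^ 2 * q v := fun s v => by
    simp only [hq_def, WithLp.ofLp_smul, sum_sum_smul_mul_smul]
    ring
  have hq_neg : q (zn - zp) = q (zp - zn) := by
    rw [← neg_sub, ← neg_one_smul ℝ, hq]
    norm_num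
  have hmodel : IsMinOn (fun z => innerₗ _ g (z - zn) + q (z - zn) + R z) C zp :=
    isMinOn_iff.2 fun z hz => by
      simpa only [innerₗ_apply_apply, real_inner_comm _ g, add_assoc, add_le_add_iff_left]
        using hmin z hz
  have hdescent : ⟪zp - zn, g⟫ + 2 * q (zp - zn) + R zp ≤ R zn := by
    simpa only [innerₗ_apply_apply, real_inner_comm _ g] using
      (hR.subset (subset_univ C) hCconv).add_two_mul_le_of_isMinOn hq hzn hzp hmodel
  change q (zn - zp) ≤ _
  linarith

/-- Majorization descent lemma for the forward-backward subproblem. -/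
theorem stmt6 {m : ℕ} (J R : EuclideanSpace ℝ (Fin m) → ℝ)
    (hR : ConvexOn ℝ Set.univ R)
    (H : Matrix (Fin m) (Fin m) ℝ) (hHsymm : H.IsSymm)
    (hHpd : ∀ v : EuclideanSpace ℝ (Fin m), v ≠ 0 → 0 < ∑ i, ∑ j, v i * H i j * v j)
    (τ : ℝ) (hτ : 0 < τ)
    (C : Set (EuclideanSpace ℝ (Fin m))) (hCclosed : IsClosed C) (hCconv : Convex ℝ C)
    (zn : EuclideanSpace ℝ (Fin m)) (hzn : zn ∈ C)
    (g : EuclideanSpace ℝ (Fin m)) (hg : HasGradientAt J g zn)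
    (zp : EuclideanSpace ℝ (Fin m)) (hzp : zp ∈ C)
    (hmin : ∀ z ∈ C,
      J zn + ⟪zp - zn, g⟫ + (1 / (2 * τ)) * (∑ i, ∑ j, (zp - zn) i * H i j * (zp - zn) j)
          + R zp ≤
        J zn + ⟪z - zn, g⟫ + (1 / (2 * τ)) * (∑ i, ∑ j, (z - zn) i * H i j * (z - zn) j)
          + R z)
    (hmaj : J zp ≤
      J zn + ⟪zp - zn, g⟫ +
        (1 / (2 * τ)) * (∑ i, ∑ j, (zp - zn) i * H i j * (zp - zn) j)) :
    (1 / (2 * τ)) * (∑ i, ∑ j, (zn - zp) i * H i j * (zn - zp) j) ≤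
      (J zn + R zn) - (J zp + R zp) :=
  stmt6_general J R hR H τ C hCconv zn hzn g zp hzp hmin hmaj
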